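/- arXiv:1909.10024 — 4 statements merged into one kernel-verified Lean document; each statement's English description precedes it below -/
import Mathlib

section
/- The two double-centered forms of sample distance covariance coincide: for symmetric matrices $a,b$ with zero diagonal, with $A^*_{i,j} := a_{i,j} - \frac{a_{i,+}}{n-1} - \frac{a_{+,j}}{n-1} + \frac{a_{+,+}}{n(n-1)}$ for $i\ne j$ and $A^*_{i,i} := \frac{a_{i,+}}{n-1} - \frac{a_{+,+}}{n(n-1)}$ (similarly $B^*$), one has $\frac{1}{n(n-3)}\Big\{\sum_{i,j=1}^n A^*_{i,j}B^*_{i,j} - \frac{n}{n-2}\sum_{i=1}^n A^*_{i,i}B^*_{i,i}\Big\} = \frac{1}{n(n-3)}\sum_{i\ne j}a_{i,j}b_{i,j} - \frac{2}{n(n-2)(n-3)}\sum_{i=1}^n a_{i,+}b_{i,+} + \frac{a_{+,+}b_{+,+}}{n(n-1)(n-2)(n-3)}$, provided $n \ge 4$. -/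
open Finset

set_option maxHeartbeats 2000000 in
/-- Equivalence of the two double-centered forms of sample distance covariance. -/
theorem stmt2 (n : ℕ) (hn : 4 ≤ n) (a b : Fin n → Fin n → ℝ)
    (ha_symm : ∀ i j, a i j = a j i) (hb_symm : ∀ i j, b i j = b j i)
    (ha_diag : ∀ i, a i i = 0) (hb_diag : ∀ i, b i i = 0)
    (arow acol brow bcol : Fin n → ℝ) (atot btot : ℝ)
    (harow : ∀ i, arow i = ∑ ℓ, a i ℓ) (hacol : ∀ j, acol j = ∑ k, a k j)
    (hbrow : ∀ i, brow i = ∑ ℓ, b i ℓ) (hbcol : ∀ j, bcol j = ∑ k, b k j)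
    (hatot : atot = ∑ k, ∑ ℓ, a k ℓ) (hbtot : btot = ∑ k, ∑ ℓ, b k ℓ)
    (A B : Fin n → Fin n → ℝ)
    (hA : ∀ i j, A i j =
      if i = j then arow i / (n - 1) - atot / (n * (n - 1))
      else a i j - arow i / (n - 1) - acol j / (n - 1) + atot / (n * (n - 1)))
    (hB : ∀ i j, B i j =
      if i = j then brow i / (n - 1) - btot / (n * (n - 1))
      else b i j - brow i / (n - 1) - bcol j / (n - 1) + btot / (n * (n - 1))) :
    (1 / (n * (n - 3) : ℝ)) *
        ((∑ i, ∑ j, A i j * B i j) - (n / (n - 2 : ℝ)) * ∑ i, A i i * B i i) =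
      (1 / (n * (n - 3) : ℝ)) * (∑ i, ∑ j, (if i = j then 0 else a i j * b i j))
        - (2 / (n * (n - 2) * (n - 3) : ℝ)) * ∑ i, arow i * brow i
        + (atot * btot) / (n * (n - 1) * (n - 2) * (n - 3) : ℝ) := by
  have hx4 : (4 : ℝ) ≤ (n : ℝ) := by exact_mod_cast hn
  have hn0 : (n : ℝ) ≠ 0 := by linarith
  have hn1 : (n : ℝ) - 1 ≠ 0 := by intro h; nlinarith
  have hn2 : (n : ℝ) - 2 ≠ 0 := by intro h; nlinarith
  have hn3 : (n : ℝ) - 3 ≠ 0 := by intro h; nlinarith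
  obtain ⟨c, hc⟩ : ∃ c : ℝ, c = 1 / ((n : ℝ) - 1) := ⟨_, rfl⟩
  obtain ⟨da, hda⟩ : ∃ d : ℝ, d = atot / ((n : ℝ) * ((n : ℝ) - 1)) := ⟨_, rfl⟩
  obtain ⟨db, hdb⟩ : ∃ d : ℝ, d = btot / ((n : ℝ) * ((n : ℝ) - 1)) := ⟨_, rfl⟩
  -- column sums equal row sums by symmetry
  have hcol : ∀ j, acol j = arow j := fun j => by
    rw [hacol, harow]; exact Finset.sum_congr rfl fun k _ => ha_symm k j
  have hcolb : ∀ j, bcol j = brow j := fun j => by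
    rw [hbcol, hbrow]; exact Finset.sum_congr rfl fun k _ => hb_symm k j
  have hcolsum : ∀ j, ∑ k, a k j = arow j := fun j => by rw [← hacol, hcol]
  have hcolsumb : ∀ j, ∑ k, b k j = brow j := fun j => by rw [← hbcol, hcolb]
  have hta : ∑ k, arow k = atot := by
    rw [hatot]; exact Finset.sum_congr rfl fun k _ => harow k
  have htb : ∑ k, brow k = btot := by
    rw [hbtot]; exact Finset.sum_congr rfl fun k _ => hbrow k
  -- rewritten centering matrices
  have hA' : ∀ i j, A i j =
      if i = j then c * arow i - da
      else a i j - c * arow i - c * arow j + da := by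
    intro i j
    rw [hA i j]
    by_cases h : i = j
    · rw [if_pos h, if_pos h, hc, hda]; ring
    · rw [if_neg h, if_neg h, hcol, hc, hda]; ring
  have hB' : ∀ i j, B i j =
      if i = j then c * brow i - db
      else b i j - c * brow i - c * brow j + db := by
    intro i j
    rw [hB i j]
    by_cases h : i = j
    · rw [if_pos h, if_pos h, hc, hdb]; ring
    · rw [if_neg h, if_neg h, hcolb, hc, hdb]; ring
  -- row/column weighted sums
  have hQ : ∑ i, ∑ j, a i j * brow j = ∑ k, arow k * brow k := by
    rw [Finset.sum_comm]
    exact Finset.sum_congr rfl fun j _ => by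
      rw [← Finset.sum_mul, hcolsum]
  have hR : ∑ i, ∑ j, b i j * arow j = ∑ k, arow k * brow k := by
    rw [Finset.sum_comm]
    refine Finset.sum_congr rfl fun j _ => ?_
    rw [← Finset.sum_mul, hcolsumb]; ring
  -- diagonal sum
  have hDiag : ∑ i, A i i * B i i =
      (c * c) * (∑ k, arow k * brow k) - c * db * atot - c * da * btot
        + (n : ℝ) * (da * db) := by
    have h1 : ∀ i : Fin n, A i i * B i i =
        (c * c) * (arow i * brow i) + (-(c * db)) * arow i
          + (-(c * da)) * brow i + da * db := by
      intro i; rw [hA' i i, hB' i i, if_pos rfl, if_pos rfl]; ring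
    calc ∑ i, A i i * B i i
        = ∑ i, ((c * c) * (arow i * brow i) + (-(c * db)) * arow i
            + (-(c * da)) * brow i + da * db) :=
          Finset.sum_congr rfl fun i _ => h1 i
      _ = (c * c) * (∑ k, arow k * brow k) + (-(c * db)) * (∑ k, arow k)
            + (-(c * da)) * (∑ k, brow k) + (n : ℝ) * (da * db) := by
          simp only [Finset.sum_add_distrib, ← Finset.mul_sum, Finset.sum_const,
            Finset.card_univ, Fintype.card_fin, nsmul_eq_mul]
          ring
      _ = _ := by rw [hta, htb]; ring
  -- diagonal of the extended (else-branch) matrix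
  have hEdiag : ∑ i, ((a i i - c * arow i - c * arow i + da)
        * (b i i - c * brow i - c * brow i + db)) =
      4 * (c * c) * (∑ k, arow k * brow k) - 2 * c * db * atot
        - 2 * c * da * btot + (n : ℝ) * (da * db) := by
    have h1 : ∀ i : Fin n, ((a i i - c * arow i - c * arow i + da)
          * (b i i - c * brow i - c * brow i + db)) =
        (4 * (c * c)) * (arow i * brow i) + (-(2 * c * db)) * arow i
          + (-(2 * c * da)) * brow i + da * db := by
      intro i; rw [ha_diag i, hb_diag i]; ring
    calc ∑ i, ((a i i - c * arow i - c * arow i + da)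
          * (b i i - c * brow i - c * brow i + db))
        = ∑ i, ((4 * (c * c)) * (arow i * brow i) + (-(2 * c * db)) * arow i
            + (-(2 * c * da)) * brow i + da * db) :=
          Finset.sum_congr rfl fun i _ => h1 i
      _ = (4 * (c * c)) * (∑ k, arow k * brow k) + (-(2 * c * db)) * (∑ k, arow k)
            + (-(2 * c * da)) * (∑ k, brow k) + (n : ℝ) * (da * db) := by
          simp only [Finset.sum_add_distrib, ← Finset.mul_sum, Finset.sum_const,
            Finset.card_univ, Fintype.card_fin, nsmul_eq_mul]
          ring
      _ = _ := by rw [hta, htb]; ring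
  -- full double sum of the extended matrix products
  have hrow : ∀ i : Fin n, ∑ j, ((a i j - c * arow i - c * arow j + da)
        * (b i j - c * brow i - c * brow j + db)) =
      (∑ j, a i j * b i j) - c * (∑ j, a i j * brow j) - c * (∑ j, b i j * arow j)
        + (db + c * c * btot - c * db * (n : ℝ)) * arow i
        + (da + c * c * atot - c * da * (n : ℝ)) * brow i
        + (c * c * (n : ℝ) - 2 * c) * (arow i * brow i)
        + ((c * c) * (∑ k, arow k * brow k) - c * db * atot - c * da * btot
            + (n : ℝ) * (da * db)) := by
    intro i
    have h1 : ∀ j : Fin n, ((a i j - c * arow i - c * arow j + da)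
          * (b i j - c * brow i - c * brow j + db)) =
        a i j * b i j + (db - c * brow i) * a i j + (-c) * (a i j * brow j)
          + (da - c * arow i) * b i j + (-c) * (b i j * arow j)
          + (c * c * brow i - c * db) * arow j + (c * c * arow i - c * da) * brow j
          + (c * c) * (arow j * brow j)
          + (c * c * (arow i * brow i) - c * db * arow i - c * da * brow i
              + da * db) := fun j => by ring
    calc ∑ j, ((a i j - c * arow i - c * arow j + da)
          * (b i j - c * brow i - c * brow j + db))
        = ∑ j, (a i j * b i j + (db - c * brow i) * a i j + (-c) * (a i j * brow j)
            + (da - c * arow i) * b i j + (-c) * (b i j * arow j)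
            + (c * c * brow i - c * db) * arow j + (c * c * arow i - c * da) * brow j
            + (c * c) * (arow j * brow j)
            + (c * c * (arow i * brow i) - c * db * arow i - c * da * brow i
                + da * db)) := Finset.sum_congr rfl fun j _ => h1 j
      _ = (∑ j, a i j * b i j) + (db - c * brow i) * (∑ j, a i j)
            + (-c) * (∑ j, a i j * brow j)
            + (da - c * arow i) * (∑ j, b i j) + (-c) * (∑ j, b i j * arow j)
            + (c * c * brow i - c * db) * (∑ k, arow k)
            + (c * c * arow i - c * da) * (∑ k, brow k)
            + (c * c) * (∑ k, arow k * brow k)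
            + (n : ℝ) * (c * c * (arow i * brow i) - c * db * arow i
                - c * da * brow i + da * db) := by
          simp only [Finset.sum_add_distrib, ← Finset.mul_sum, Finset.sum_const,
            Finset.card_univ, Fintype.card_fin, nsmul_eq_mul]
          ring
      _ = _ := by rw [← harow i, ← hbrow i, hta, htb]; ring
  have hF : ∑ i, ∑ j, ((a i j - c * arow i - c * arow j + da)
        * (b i j - c * brow i - c * brow j + db)) =
      (∑ i, ∑ j, a i j * b i j) - 4 * c * (∑ k, arow k * brow k)
        + db * atot + da * btot
        + 2 * (c * c) * (n : ℝ) * (∑ k, arow k * brow k)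
        + 2 * (c * c) * (atot * btot)
        - 2 * c * (n : ℝ) * da * btot - 2 * c * (n : ℝ) * db * atot
        + (n : ℝ) * (n : ℝ) * (da * db) := by
    calc ∑ i, ∑ j, ((a i j - c * arow i - c * arow j + da)
          * (b i j - c * brow i - c * brow j + db))
        = ∑ i, ((∑ j, a i j * b i j) - c * (∑ j, a i j * brow j)
            - c * (∑ j, b i j * arow j)
            + (db + c * c * btot - c * db * (n : ℝ)) * arow i
            + (da + c * c * atot - c * da * (n : ℝ)) * brow i
            + (c * c * (n : ℝ) - 2 * c) * (arow i * brow i)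
            + ((c * c) * (∑ k, arow k * brow k) - c * db * atot - c * da * btot
                + (n : ℝ) * (da * db))) :=
          Finset.sum_congr rfl fun i _ => hrow i
      _ = (∑ i, ∑ j, a i j * b i j) - c * (∑ i, ∑ j, a i j * brow j)
            - c * (∑ i, ∑ j, b i j * arow j)
            + (db + c * c * btot - c * db * (n : ℝ)) * (∑ k, arow k)
            + (da + c * c * atot - c * da * (n : ℝ)) * (∑ k, brow k)
            + (c * c * (n : ℝ) - 2 * c) * (∑ k, arow k * brow k)
            + (n : ℝ) * ((c * c) * (∑ k, arow k * brow k) - c * db * atot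
                - c * da * btot + (n : ℝ) * (da * db)) := by
          simp only [Finset.sum_add_distrib, Finset.sum_sub_distrib,
            ← Finset.mul_sum, Finset.sum_const, Finset.card_univ,
            Fintype.card_fin, nsmul_eq_mul]
          ring
      _ = _ := by rw [hQ, hR, hta, htb]; ring
  -- decomposition of the main double sum
  have hsplit : ∑ i, ∑ j, A i j * B i j =
      (∑ i, A i i * B i i)
        - (∑ i, ((a i i - c * arow i - c * arow i + da)
            * (b i i - c * brow i - c * brow i + db)))
        + ∑ i, ∑ j, ((a i j - c * arow i - c * arow j + da)
            * (b i j - c * brow i - c * brow j + db)) := by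
    have hrow2 : ∀ i : Fin n, ∑ j, A i j * B i j =
        A i i * B i i - ((a i i - c * arow i - c * arow i + da)
            * (b i i - c * brow i - c * brow i + db))
          + ∑ j, ((a i j - c * arow i - c * arow j + da)
              * (b i j - c * brow i - c * brow j + db)) := by
      intro i
      have h1 : ∀ j : Fin n, A i j * B i j =
          (if i = j then (A i i * B i i - ((a i i - c * arow i - c * arow i + da)
              * (b i i - c * brow i - c * brow i + db))) else 0)
            + ((a i j - c * arow i - c * arow j + da)
                * (b i j - c * brow i - c * brow j + db)) := by
        intro j
        by_cases h : i = j
        · subst h; rw [if_pos rfl]; ring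
        · rw [if_neg h, zero_add, hA' i j, hB' i j, if_neg h, if_neg h]
      calc ∑ j, A i j * B i j
          = ∑ j, ((if i = j then (A i i * B i i
              - ((a i i - c * arow i - c * arow i + da)
                * (b i i - c * brow i - c * brow i + db))) else 0)
            + ((a i j - c * arow i - c * arow j + da)
                * (b i j - c * brow i - c * brow j + db))) :=
            Finset.sum_congr rfl fun j _ => h1 j
        _ = _ := by
            rw [Finset.sum_add_distrib, Finset.sum_ite_eq]
            simp
    calc ∑ i, ∑ j, A i j * B i j
        = ∑ i, (A i i * B i i - ((a i i - c * arow i - c * arow i + da)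
              * (b i i - c * brow i - c * brow i + db))
            + ∑ j, ((a i j - c * arow i - c * arow j + da)
                * (b i j - c * brow i - c * brow j + db))) :=
          Finset.sum_congr rfl fun i _ => hrow2 i
      _ = _ := by
          rw [Finset.sum_add_distrib, Finset.sum_sub_distrib]
  -- the off-diagonal a·b sum equals the full sum
  have hT : ∑ i, ∑ j, (if i = j then 0 else a i j * b i j)
      = ∑ i, ∑ j, a i j * b i j := by
    refine Finset.sum_congr rfl fun i _ => Finset.sum_congr rfl fun j _ => ?_
    by_cases h : i = j
    · subst h; rw [if_pos rfl, ha_diag i, zero_mul]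
    · rw [if_neg h]
  rw [hsplit, hDiag, hEdiag, hF, hT, hc, hda, hdb]
  field_simp
  ring
end

section
/- Let $P$ be an absolutely continuous probability measure on $\mathbb{R}^p$ and $Q$ one on $\mathbb{R}^q$, and let $F: \mathbb{R}^p \to S$, $G: \mathbb{R}^q \to T$ be Borel maps into the open unit balls such that there exist Borel sets $N_P \subseteq \mathbb{R}^p$, $N_Q \subseteq \mathbb{R}^q$ of measure zero under $P$ and $Q$ respectively, with $F$ restricted to $\mathbb{R}^p \setminus N_P$ and $G$ restricted to $\mathbb{R}^q \setminus N_Q$ injective. If $X \sim P$, $Y \sim Q$ are random vectors on a common probability space and $F(X)$ is independent of $G(Y)$, then $X$ is independent of $Y$. -/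
open MeasureTheory ProbabilityTheory

/-! A map that is injective off a null set of the law of `X` can be inverted measurably on the
complement (Lusin–Souslin), so `X` is almost surely a measurable function of `F ∘ X`; likewise
for `Y`. Measurable functions of independent variables are independent, and independence is
invariant under almost sure equality. -/

theorem Set.InjOn.exists_measurable_leftInvOn {α β : Type*} [MeasurableSpace α]
    [StandardBorelSpace α] [Nonempty α] [MeasurableSpace β]
    [MeasurableSpace.CountablySeparated β] {F : α → β} {N : Set α} (hinj : Set.InjOn F Nᶜ)
    (hF : Measurable F) (hN : MeasurableSet N) :
    ∃ g : β → α, Measurable g ∧ Set.LeftInvOn g F Nᶜ := by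
  have : StandardBorelSpace (Nᶜ : Set α) := hN.compl.standardBorel
  have hemb : MeasurableEmbedding (Nᶜ.domRestrict F) :=
    (hF.comp measurable_subtype_coe).measurableEmbedding hinj.injective
  obtain ⟨g, hg, hgF⟩ := hemb.exists_measurable_extend measurable_subtype_coe fun _ => ‹_›
  exact ⟨g, hg, fun x hx => congrFun hgF ⟨x, hx⟩⟩

theorem ae_comp_eq_of_leftInvOn {Ω α β : Type*} {mΩ : MeasurableSpace Ω} [MeasurableSpace α]
    {μ : Measure Ω} {X : Ω → α} {F : α → β} {g : β → α} {N : Set α} (hX : AEMeasurable X μ)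
    (hN0 : μ.map X N = 0) (hg : Set.LeftInvOn g F Nᶜ) :
    g ∘ F ∘ X =ᵐ[μ] X := by
  have hnot : ∀ᵐ x ∂μ.map X, x ∉ N := measure_eq_zero_iff_ae_notMem.mp hN0
  filter_upwards [ae_of_ae_map hX hnot] with ω hω using hg hω

theorem ProbabilityTheory.IndepFun.of_comp_of_injOn {Ω α β γ δ : Type*}
    {mΩ : MeasurableSpace Ω} {μ : Measure Ω}
    [MeasurableSpace α] [StandardBorelSpace α] [Nonempty α]
    [MeasurableSpace β] [StandardBorelSpace β] [Nonempty β]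
    [MeasurableSpace γ] [MeasurableSpace.CountablySeparated γ]
    [MeasurableSpace δ] [MeasurableSpace.CountablySeparated δ]
    {X : Ω → α} {Y : Ω → β} {F : α → γ} {G : β → δ} {NX : Set α} {NY : Set β}
    (hindep : IndepFun (F ∘ X) (G ∘ Y) μ) (hX : AEMeasurable X μ) (hY : AEMeasurable Y μ)
    (hF : Measurable F) (hG : Measurable G) (hNX : MeasurableSet NX) (hNY : MeasurableSet NY)
    (hNX0 : μ.map X NX = 0) (hNY0 : μ.map Y NY = 0)
    (hFinj : Set.InjOn F NXᶜ) (hGinj : Set.InjOn G NYᶜ) :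
    IndepFun X Y μ := by
  obtain ⟨f, hf, hfF⟩ := hFinj.exists_measurable_leftInvOn hF hNX
  obtain ⟨g, hg, hgG⟩ := hGinj.exists_measurable_leftInvOn hG hNY
  exact (hindep.comp hf hg).congr (ae_comp_eq_of_leftInvOn hX hNX0 hfF)
    (ae_comp_eq_of_leftInvOn hY hNY0 hgG)

theorem stmt5_general {Ω : Type*} [MeasureSpace Ω]
    (p q : ℕ)
    (X : Ω → EuclideanSpace ℝ (Fin p)) (Y : Ω → EuclideanSpace ℝ (Fin q))
    (hX : Measurable X) (hY : Measurable Y)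
    (F : EuclideanSpace ℝ (Fin p) → EuclideanSpace ℝ (Fin p))
    (G : EuclideanSpace ℝ (Fin q) → EuclideanSpace ℝ (Fin q))
    (hF : Measurable F) (hG : Measurable G)
    (NP : Set (EuclideanSpace ℝ (Fin p))) (NQ : Set (EuclideanSpace ℝ (Fin q)))
    (hNP : MeasurableSet NP) (hNQ : MeasurableSet NQ)
    (hNP0 : Measure.map X ℙ NP = 0) (hNQ0 : Measure.map Y ℙ NQ = 0)
    (hFinj : Set.InjOn F NPᶜ) (hGinj : Set.InjOn G NQᶜ)
    (hindep : IndepFun (F ∘ X) (G ∘ Y) ℙ) :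
    IndepFun X Y ℙ :=
  hindep.of_comp_of_injOn hX.aemeasurable hY.aemeasurable hF hG hNP hNQ hNP0 hNQ0 hFinj hGinj

/-- If `F` and `G` are Borel maps into the open unit balls that are injective off
null sets of the (absolutely continuous) marginal laws of `X` and `Y`, then
independence of `F(X)` and `G(Y)` implies independence of `X` and `Y`. -/
theorem stmt5 {Ω : Type*} [MeasureSpace Ω] [IsProbabilityMeasure (ℙ : Measure Ω)]
    (p q : ℕ)
    (X : Ω → EuclideanSpace ℝ (Fin p)) (Y : Ω → EuclideanSpace ℝ (Fin q))
    (hX : Measurable X) (hY : Measurable Y)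
    (hPac : Measure.map X ℙ ≪ (volume : Measure (EuclideanSpace ℝ (Fin p))))
    (hQac : Measure.map Y ℙ ≪ (volume : Measure (EuclideanSpace ℝ (Fin q))))
    (F : EuclideanSpace ℝ (Fin p) → EuclideanSpace ℝ (Fin p))
    (G : EuclideanSpace ℝ (Fin q) → EuclideanSpace ℝ (Fin q))
    (hF : Measurable F) (hG : Measurable G)
    (hFball : ∀ x, ‖F x‖ < 1) (hGball : ∀ y, ‖G y‖ < 1)
    (NP : Set (EuclideanSpace ℝ (Fin p))) (NQ : Set (EuclideanSpace ℝ (Fin q)))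
    (hNP : MeasurableSet NP) (hNQ : MeasurableSet NQ)
    (hNP0 : Measure.map X ℙ NP = 0) (hNQ0 : Measure.map Y ℙ NQ = 0)
    (hFinj : Set.InjOn F NPᶜ) (hGinj : Set.InjOn G NQᶜ)
    (hindep : IndepFun (F ∘ X) (G ∘ Y) ℙ) :
    IndepFun X Y ℙ :=
  stmt5_general p q X Y hX hY F G hF hG NP NQ hNP hNQ hNP0 hNQ0 hFinj hGinj hindep
end

section
/- Let $e, e', f, f' : \{1,\dots,n\} \to \mathbb{R}$ satisfy $\frac{1}{n}\sum_j e(j) = \frac{1}{n}\sum_j e'(j) = \frac{1}{n}\sum_j f(j) = \frac{1}{n}\sum_j f'(j) = 0$ and the orthonormality relations $\frac{1}{n}\sum_j e(j)e'(j) = \delta$, $\frac{1}{n}\sum_j f(j)f'(j) = \delta'$ with $\delta, \delta' \in \{0,1\}$. For $\pi$ a uniformly random permutation of $\{1,\dots,n\}$ ($n \ge 2$), define $S = \sum_{j=1}^n e(j) f(\pi(j))$ and $S' = \sum_{j=1}^n e'(j) f'(\pi(j))$. Then $\mathrm{Cov}(S, S') = \frac{n^2}{n-1} \delta \delta'$.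 -/
/-!
Write `P i j = ∑_π f (π i) * f' (π j)`. Reindexing `π ↦ π * σ` shows `P (σ i) (σ j) = P i j`, so by
2-transitivity of the symmetric group `P` takes one value `d` on the diagonal and one value `o` off
it. Summing the diagonal gives `n d = n! ⟨f, f'⟩`; summing everything gives
`n d + n (n - 1) o = n! (∑ f) (∑ f') = 0`, whence `(n - 1) (d - o) = n d`. Expanding the product,
`∑_π S S' = ∑_{i,j} e i e' j P i j = o (∑ e) (∑ e') + (d - o) ⟨e, e'⟩ = (d - o) ⟨e, e'⟩`,
while `∑_π S = 0` because `∑_π f (π j)` does not depend on `j` and `∑ e = 0`.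
-/

section PairCorrelation

variable {α : Type*} [DecidableEq α]

lemma Equiv.Perm.exists_apply_eq_and_apply_eq {i j i' j' : α} (hij : i ≠ j) (hij' : i' ≠ j') :
    ∃ σ : Equiv.Perm α, σ i = i' ∧ σ j = j' := by
  have hj' : j' ≠ Equiv.swap j j' i := by
    simpa using (Equiv.swap j j').injective.ne hij.symm
  exact ⟨Equiv.swap (Equiv.swap j j' i) i' * Equiv.swap j j', by simp,
    by simp [Equiv.Perm.mul_apply, Equiv.swap_apply_of_ne_of_ne hj' hij'.symm]⟩

variable [Fintype α] {R : Type*} [CommRing R]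

lemma sum_perm_apply_eq {M : Type*} [AddCommMonoid M] (x : α → M) (i j : α) :
    ∑ π : Equiv.Perm α, x (π i) = ∑ π : Equiv.Perm α, x (π j) := by
  simpa using Equiv.sum_comp (Equiv.mulRight (Equiv.swap i j)) (fun π => x (π j))

lemma sum_perm_sum_mul_apply_eq_zero {e : α → R} (he : ∑ i, e i = 0) (x : α → R) :
    ∑ π : Equiv.Perm α, ∑ i, e i * x (π i) = 0 := by
  rcases isEmpty_or_nonempty α with _ | ⟨⟨i₀⟩⟩
  · simp
  calc ∑ π : Equiv.Perm α, ∑ i, e i * x (π i)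
      = ∑ i, e i * ∑ π : Equiv.Perm α, x (π i₀) := by
        rw [Finset.sum_comm]
        exact Finset.sum_congr rfl fun i _ => by rw [← Finset.mul_sum, sum_perm_apply_eq x i i₀]
    _ = 0 := by rw [← Finset.sum_mul, he, zero_mul]

def pairCorrelation (x y : α → R) (i j : α) : R :=
  ∑ π : Equiv.Perm α, x (π i) * y (π j)

variable (x y : α → R)

lemma pairCorrelation_apply_apply (σ : Equiv.Perm α) (i j : α) :
    pairCorrelation x y (σ i) (σ j) = pairCorrelation x y i j :=
  Equiv.sum_comp (Equiv.mulRight σ) (fun π => x (π i) * y (π j))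

lemma pairCorrelation_self_eq (i j : α) :
    pairCorrelation x y i i = pairCorrelation x y j j := by
  simpa using pairCorrelation_apply_apply x y (Equiv.swap j i) j j

lemma pairCorrelation_eq_of_ne {i j i' j' : α} (hij : i ≠ j) (hij' : i' ≠ j') :
    pairCorrelation x y i j = pairCorrelation x y i' j' := by
  obtain ⟨σ, rfl, rfl⟩ := Equiv.Perm.exists_apply_eq_and_apply_eq hij hij'
  exact (pairCorrelation_apply_apply x y σ i j).symm

lemma sum_pairCorrelation_self :
    ∑ i, pairCorrelation x y i i = (Fintype.card α).factorial * ∑ k, x k * y k := by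
  unfold pairCorrelation
  rw [Finset.sum_comm, Finset.sum_congr rfl fun π _ => Equiv.sum_comp π (fun k => x k * y k)]
  simp [Fintype.card_perm]

lemma sum_sum_pairCorrelation :
    ∑ i, ∑ j, pairCorrelation x y i j =
      (Fintype.card α).factorial * ((∑ k, x k) * ∑ k, y k) := by
  calc ∑ i, ∑ j, pairCorrelation x y i j
      = ∑ π : Equiv.Perm α, (∑ i, x (π i)) * ∑ j, y (π j) := by
        simp_rw [pairCorrelation, Finset.sum_mul_sum]
        exact (Finset.sum_congr rfl fun i _ => Finset.sum_comm).trans Finset.sum_comm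
    _ = _ := by simp [Equiv.sum_comp, Fintype.card_perm]

lemma sum_perm_sum_mul_sum_eq (e e' : α → R) :
    ∑ π : Equiv.Perm α, (∑ i, e i * x (π i)) * (∑ j, e' j * y (π j)) =
      ∑ i, ∑ j, e i * e' j * pairCorrelation x y i j := by
  simp_rw [pairCorrelation, Finset.sum_mul_sum, Finset.mul_sum]
  rw [Finset.sum_comm]
  refine Finset.sum_congr rfl fun i _ => ?_
  rw [Finset.sum_comm]
  exact Finset.sum_congr rfl fun j _ => Finset.sum_congr rfl fun π _ => by ring

lemma sum_sum_mul_mul_of_diag_offDiag {M : α → α → R} {d o : R} (hd : ∀ i, M i i = d)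
    (ho : ∀ i j, i ≠ j → M i j = o) (u v : α → R) :
    ∑ i, ∑ j, u i * v j * M i j = o * ((∑ i, u i) * ∑ j, v j) + (d - o) * ∑ i, u i * v i := by
  have hM : ∀ i j, M i j = o + if i = j then d - o else 0 := by
    intro i j
    split_ifs with h
    · rw [h, hd]; ring
    · rw [ho i j h, add_zero]
  simp only [hM, mul_add, mul_ite, mul_zero, Finset.sum_add_distrib, Finset.sum_ite_eq,
    Finset.mem_univ, if_true]
  rw [Finset.sum_mul_sum, Finset.mul_sum, Finset.mul_sum]
  simp only [mul_comm o, mul_comm (d - o), Finset.sum_mul]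

end PairCorrelation

section Covariance

variable {α : Type*} [Fintype α] [DecidableEq α] [Nontrivial α] {K : Type*} [Field K] [CharZero K]

theorem card_sub_one_mul_sum_perm_sum_mul_sum {e x : α → K} (he : ∑ i, e i = 0)
    (hx : ∑ k, x k = 0) (e' y : α → K) :
    ((Fintype.card α : K) - 1) *
        ∑ π : Equiv.Perm α, (∑ i, e i * x (π i)) * (∑ j, e' j * y (π j)) =
      (Fintype.card α).factorial * (∑ i, e i * e' i) * ∑ k, x k * y k := by
  obtain ⟨i₀, j₀, h₀⟩ := exists_pair_ne α
  set d := pairCorrelation x y i₀ i₀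
  set o := pairCorrelation x y i₀ j₀
  have hd : ∀ i, pairCorrelation x y i i = d := fun i => pairCorrelation_self_eq x y i i₀
  have ho : ∀ i j, i ≠ j → pairCorrelation x y i j = o :=
    fun i j h => pairCorrelation_eq_of_ne x y h h₀
  have hcard : (Fintype.card α : K) ≠ 0 := Nat.cast_ne_zero.mpr Fintype.card_ne_zero
  have hdiag : (Fintype.card α : K) * d = (Fintype.card α).factorial * ∑ k, x k * y k := by
    rw [← sum_pairCorrelation_self]
    simp [hd]
  have hoff : ((Fintype.card α : K) - 1) * o + d = 0 := by
    have htotal := sum_sum_mul_mul_of_diag_offDiag hd ho (fun _ => 1) (fun _ => 1)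
    simp only [one_mul, sum_sum_pairCorrelation, hx, zero_mul, mul_zero, Finset.sum_const,
      Finset.card_univ, nsmul_eq_mul, mul_one] at htotal
    refine (mul_eq_zero.mp ?_).resolve_left hcard
    linear_combination -htotal
  rw [sum_perm_sum_mul_sum_eq, sum_sum_mul_mul_of_diag_offDiag hd ho, he, zero_mul, mul_zero,
    zero_add]
  linear_combination (∑ i, e i * e' i) * (hdiag - hoff)

end Covariance

theorem stmt10_general (n : ℕ) (hn : 2 ≤ n) (e e' f f' : Fin n → ℝ) (δ δ' : ℝ)
    (he : (1 / n : ℝ) * ∑ j, e j = 0)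
    (hf : (1 / n : ℝ) * ∑ j, f j = 0)
    (hee' : (1 / n : ℝ) * ∑ j, e j * e' j = δ)
    (hff' : (1 / n : ℝ) * ∑ j, f j * f' j = δ')
    (S S' : Equiv.Perm (Fin n) → ℝ)
    (hS : ∀ π, S π = ∑ j, e j * f (π j))
    (hS' : ∀ π, S' π = ∑ j, e' j * f' (π j)) :
    ((Nat.factorial n : ℝ))⁻¹ * (∑ π : Equiv.Perm (Fin n), S π * S' π) -
      (((Nat.factorial n : ℝ))⁻¹ * ∑ π : Equiv.Perm (Fin n), S π) *
      (((Nat.factorial n : ℝ))⁻¹ * ∑ π : Equiv.Perm (Fin n), S' π) =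
      (n ^ 2 / (n - 1) : ℝ) * δ * δ' := by
  have : Nontrivial (Fin n) := Fin.nontrivial_iff_two_le.mpr hn
  have hn0 : (n : ℝ) ≠ 0 := by positivity
  have hn1 : (n : ℝ) - 1 ≠ 0 := by
    have : (2 : ℝ) ≤ n := by exact_mod_cast hn
    linarith
  have he₀ : ∑ j, e j = 0 := by simpa [hn0] using he
  have hf₀ : ∑ j, f j = 0 := by simpa [hn0] using hf
  have hmean : ∑ π, S π = 0 := by
    simp_rw [hS]
    exact sum_perm_sum_mul_apply_eq_zero he₀ f
  have hmoment := card_sub_one_mul_sum_perm_sum_mul_sum he₀ hf₀ e' f'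
  simp only [← hS, ← hS', Fintype.card_fin] at hmoment
  rw [hmean, mul_zero, zero_mul, sub_zero, ← hee', ← hff']
  field_simp
  linear_combination hmoment

/-- Covariance of two linear permutation statistics built from empirically
centered, pairwise orthonormal score functions equals `n²/(n-1) · δ δ'`. -/
theorem stmt10 (n : ℕ) (hn : 2 ≤ n) (e e' f f' : Fin n → ℝ) (δ δ' : ℝ)
    (hδ : δ = 0 ∨ δ = 1) (hδ' : δ' = 0 ∨ δ' = 1)
    (he : (1 / n : ℝ) * ∑ j, e j = 0) (he' : (1 / n : ℝ) * ∑ j, e' j = 0)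
    (hf : (1 / n : ℝ) * ∑ j, f j = 0) (hf' : (1 / n : ℝ) * ∑ j, f' j = 0)
    (hee' : (1 / n : ℝ) * ∑ j, e j * e' j = δ)
    (hff' : (1 / n : ℝ) * ∑ j, f j * f' j = δ')
    (S S' : Equiv.Perm (Fin n) → ℝ)
    (hS : ∀ π, S π = ∑ j, e j * f (π j))
    (hS' : ∀ π, S' π = ∑ j, e' j * f' (π j)) :
    ((Nat.factorial n : ℝ))⁻¹ * (∑ π : Equiv.Perm (Fin n), S π * S' π) -
      (((Nat.factorial n : ℝ))⁻¹ * ∑ π : Equiv.Perm (Fin n), S π) *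
      (((Nat.factorial n : ℝ))⁻¹ * ∑ π : Equiv.Perm (Fin n), S' π) =
      (n ^ 2 / (n - 1) : ℝ) * δ * δ' :=
  stmt10_general n hn e e' f f' δ δ' he hf hee' hff' S S' hS hS'
end

section
/- (Hoeffding's variance formula for single-indexed permutation statistics, special case) Let $a, b : \{1,\dots,n\} \to \mathbb{R}$ with $\frac{1}{n}\sum_j a(j) = \bar{a}$ and $\frac{1}{n}\sum_j b(j) = \bar{b}$, and let $\pi$ be a uniformly random permutation of $\{1,\dots,n\}$, $n \ge 2$. Then $\mathrm{Var}\Big(\sum_{j=1}^n a(j) b(\pi(j))\Big) = \frac{1}{n-1}\Big(\sum_{j=1}^n (a(j)-\bar{a})^2\Big)\Big(\sum_{j=1}^n (b(j)-\bar{b})^2\Big)$. -/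
open Finset

section HoeffdingAux
open Equiv

lemma perm_sum_indep {n : ℕ} (f : Fin n → ℝ) (j k : Fin n) :
    ∑ π : Perm (Fin n), f (π j) = ∑ π : Perm (Fin n), f (π k) := by
  refine Fintype.sum_equiv (Equiv.mulRight (Equiv.swap j k)) _ _ fun π => ?_
  simp [Perm.mul_apply]

lemma perm_sum_single {n : ℕ} (hn : n ≠ 0) (f : Fin n → ℝ) (j : Fin n) :
    ∑ π : Perm (Fin n), f (π j) = ((n.factorial : ℝ) / n) * ∑ i, f i := by
  have h1 : (n : ℝ) * ∑ π : Perm (Fin n), f (π j)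
      = (n.factorial : ℝ) * ∑ i, f i := by
    calc (n:ℝ) * ∑ π : Perm (Fin n), f (π j)
        = ∑ _k : Fin n, ∑ π : Perm (Fin n), f (π j) := by
          simp [Finset.sum_const, card_univ, mul_comm]
      _ = ∑ k : Fin n, ∑ π : Perm (Fin n), f (π k) :=
          Finset.sum_congr rfl fun k _ => perm_sum_indep f j k
      _ = ∑ π : Perm (Fin n), ∑ k, f (π k) := Finset.sum_comm
      _ = ∑ _π : Perm (Fin n), ∑ i, f i :=
          Finset.sum_congr rfl fun π _ => Equiv.sum_comp π f
      _ = (n.factorial : ℝ) * ∑ i, f i := by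
          simp [Finset.sum_const, card_univ, Fintype.card_perm]
  have hn' : (n : ℝ) ≠ 0 := Nat.cast_ne_zero.mpr hn
  field_simp
  linarith [h1]

lemma exists_perm_pair {n : ℕ} {j k j' k' : Fin n} (h : j ≠ k) (h' : j' ≠ k') :
    ∃ σ : Perm (Fin n), σ j' = j ∧ σ k' = k := by
  refine ⟨Equiv.swap k ((Equiv.swap j j') k') * Equiv.swap j j', ?_, ?_⟩
  · have h1 : (Equiv.swap j j') k' ≠ j := by
      intro hc
      exact h' (Equiv.swap j j'|>.injective (by simp [hc]))
    simp only [Perm.mul_apply, Equiv.swap_apply_right]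
    exact Equiv.swap_apply_of_ne_of_ne h (Ne.symm h1) |>.trans rfl
  · simp [Perm.mul_apply]

lemma perm_sum_pair_indep {n : ℕ} (f g : Fin n → ℝ) {j k j' k' : Fin n}
    (h : j ≠ k) (h' : j' ≠ k') :
    ∑ π : Perm (Fin n), f (π j) * g (π k)
      = ∑ π : Perm (Fin n), f (π j') * g (π k') := by
  obtain ⟨σ, hσj, hσk⟩ := exists_perm_pair h h'
  exact Fintype.sum_equiv (Equiv.mulRight σ) _ _ fun π => by
    simp [Perm.mul_apply, hσj, hσk]

lemma perm_offdiag_reindex {n : ℕ} (f g : Fin n → ℝ) (π : Perm (Fin n)) :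
    ∑ p ∈ (univ : Finset (Fin n)).offDiag, f (π p.1) * g (π p.2)
      = ∑ p ∈ (univ : Finset (Fin n)).offDiag, f p.1 * g p.2 := by
  refine Finset.sum_equiv (Equiv.prodCongr π π) (fun p => ?_) (fun p _ => rfl)
  simp [Finset.mem_offDiag, π.injective.ne_iff]

lemma perm_sum_pair {n : ℕ} (hn : 2 ≤ n) (f g : Fin n → ℝ) {j k : Fin n} (h : j ≠ k) :
    ∑ π : Perm (Fin n), f (π j) * g (π k)
      = ((n.factorial : ℝ) / (n * (n - 1))) *
        ∑ p ∈ (univ : Finset (Fin n)).offDiag, f p.1 * g p.2 := by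
  have hcard : ((univ : Finset (Fin n)).offDiag).card = n * (n - 1) := by
    rw [Finset.offDiag_card, card_univ, Fintype.card_fin, Nat.mul_sub, mul_one]
  have key : ((n * (n-1) : ℕ) : ℝ) * ∑ π : Perm (Fin n), f (π j) * g (π k)
      = (n.factorial : ℝ) * ∑ p ∈ (univ : Finset (Fin n)).offDiag, f p.1 * g p.2 := by
    calc ((n * (n-1) : ℕ) : ℝ) * ∑ π : Perm (Fin n), f (π j) * g (π k)
        = ∑ _p ∈ (univ : Finset (Fin n)).offDiag,
            ∑ π : Perm (Fin n), f (π j) * g (π k) := by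
          rw [Finset.sum_const, hcard]; simp [nsmul_eq_mul]
      _ = ∑ p ∈ (univ : Finset (Fin n)).offDiag,
            ∑ π : Perm (Fin n), f (π p.1) * g (π p.2) :=
          Finset.sum_congr rfl fun p hp =>
            perm_sum_pair_indep f g h (Finset.mem_offDiag.mp hp).2.2
      _ = ∑ π : Perm (Fin n), ∑ p ∈ (univ : Finset (Fin n)).offDiag,
            f (π p.1) * g (π p.2) := Finset.sum_comm
      _ = ∑ _π : Perm (Fin n), ∑ p ∈ (univ : Finset (Fin n)).offDiag,
            f p.1 * g p.2 :=
          Finset.sum_congr rfl fun π _ => perm_offdiag_reindex f g π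
      _ = (n.factorial : ℝ) * _ := by
          simp [Finset.sum_const, card_univ, Fintype.card_perm]
  have h1 : (1:ℝ) ≤ (n:ℝ) := by exact_mod_cast Nat.one_le_of_lt hn
  have hn0 : (n : ℝ) ≠ 0 := by positivity
  have hn1 : (n : ℝ) - 1 ≠ 0 := by
    have : (2:ℝ) ≤ (n:ℝ) := by exact_mod_cast hn
    linarith
  have hcast : ((n * (n-1) : ℕ) : ℝ) = (n:ℝ) * ((n:ℝ) - 1) := by
    push_cast [Nat.cast_sub (Nat.one_le_of_lt hn)]; ring
  rw [hcast] at key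
  field_simp
  linarith [key]

lemma offDiag_prod_sum {n : ℕ} (f g : Fin n → ℝ) :
    ∑ p ∈ (univ : Finset (Fin n)).offDiag, f p.1 * g p.2
      = (∑ i, f i) * (∑ i, g i) - ∑ i, f i * g i := by
  have hsplit : ∑ p ∈ (univ : Finset (Fin n)) ×ˢ univ, f p.1 * g p.2
      = ∑ p ∈ (univ : Finset (Fin n)).diag, f p.1 * g p.2
        + ∑ p ∈ (univ : Finset (Fin n)).offDiag, f p.1 * g p.2 := by
    rw [← Finset.sum_union (Finset.disjoint_diag_offDiag _),
      Finset.diag_union_offDiag]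
  have h1 : ∑ p ∈ (univ : Finset (Fin n)) ×ˢ univ, f p.1 * g p.2
      = (∑ i, f i) * (∑ i, g i) := by
    rw [Finset.sum_mul_sum, ← Finset.sum_product']
  have h2 : ∑ p ∈ (univ : Finset (Fin n)).diag, f p.1 * g p.2
      = ∑ i, f i * g i := Finset.sum_diag _ _
  rw [h1, h2] at hsplit
  linarith

lemma centered_sum_sq {n : ℕ} (c : Fin n → ℝ) (m : ℝ) :
    ∑ j, (c j - m) ^ 2 = ∑ j, c j * c j - 2 * m * (∑ j, c j) + n * (m * m) := by
  have h : ∀ j, (c j - m) ^ 2 = c j * c j - 2 * m * c j + m * m := fun j => by ring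
  simp_rw [h]
  rw [Finset.sum_add_distrib, Finset.sum_sub_distrib, ← Finset.mul_sum,
    Finset.sum_const, card_univ, Fintype.card_fin, nsmul_eq_mul]

end HoeffdingAux

/-- Hoeffding's variance formula for a single-indexed permutation statistic:
`Var(∑ j, a j * b (π j)) = (1/(n-1)) (∑ (a j - ā)²)(∑ (b j - b̄)²)` for a
uniformly random permutation `π`. -/
theorem stmt15 (n : ℕ) (hn : 2 ≤ n) (a b : Fin n → ℝ) (abar bbar : ℝ)
    (habar : abar = (1 / n : ℝ) * ∑ j, a j)
    (hbbar : bbar = (1 / n : ℝ) * ∑ j, b j) :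
    ((Nat.factorial n : ℝ))⁻¹ *
        (∑ π : Equiv.Perm (Fin n), (∑ j, a j * b (π j)) ^ 2) -
      (((Nat.factorial n : ℝ))⁻¹ *
        ∑ π : Equiv.Perm (Fin n), ∑ j, a j * b (π j)) ^ 2 =
      (1 / (n - 1) : ℝ) * (∑ j, (a j - abar) ^ 2) * (∑ j, (b j - bbar) ^ 2) := by
  have hn0 : n ≠ 0 := by omega
  have hnR : (2:ℝ) ≤ (n:ℝ) := by exact_mod_cast hn
  have hnR0 : (n : ℝ) ≠ 0 := by positivity
  have hnR1 : (n : ℝ) - 1 ≠ 0 := by linarith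
  have hF : (n.factorial : ℝ) ≠ 0 := Nat.cast_ne_zero.mpr n.factorial_ne_zero
  -- first moment
  have hE : ∑ π : Equiv.Perm (Fin n), ∑ j, a j * b (π j)
      = ((n.factorial : ℝ) / n) * ((∑ j, a j) * (∑ j, b j)) := by
    rw [Finset.sum_comm]
    have h1 : ∀ j : Fin n, ∑ π : Equiv.Perm (Fin n), a j * b (π j)
        = a j * (((n.factorial : ℝ) / n) * ∑ i, b i) := fun j => by
      rw [← Finset.mul_sum, perm_sum_single hn0 b j]
    simp_rw [h1]
    rw [← Finset.sum_mul]
    ring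
  -- second moment
  have hsq : ∀ π : Equiv.Perm (Fin n), (∑ j, a j * b (π j)) ^ 2
      = ∑ p ∈ (univ : Finset (Fin n)) ×ˢ univ,
          (a p.1 * a p.2) * (b (π p.1) * b (π p.2)) := by
    intro π
    rw [sq, Finset.sum_mul_sum, ← Finset.sum_product']
    exact Finset.sum_congr rfl fun p _ => by ring
  have hE2 : ∑ π : Equiv.Perm (Fin n), (∑ j, a j * b (π j)) ^ 2
      = ((n.factorial : ℝ) / n) * ((∑ i, a i * a i) * (∑ i, b i * b i))
        + ((n.factorial : ℝ) / (n * ((n:ℝ) - 1))) *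
          ((∑ p ∈ (univ : Finset (Fin n)).offDiag, a p.1 * a p.2) *
           (∑ p ∈ (univ : Finset (Fin n)).offDiag, b p.1 * b p.2)) := by
    calc ∑ π : Equiv.Perm (Fin n), (∑ j, a j * b (π j)) ^ 2
        = ∑ π : Equiv.Perm (Fin n), ∑ p ∈ (univ : Finset (Fin n)) ×ˢ univ,
            (a p.1 * a p.2) * (b (π p.1) * b (π p.2)) :=
          Finset.sum_congr rfl fun π _ => hsq π
      _ = ∑ p ∈ (univ : Finset (Fin n)) ×ˢ univ, ∑ π : Equiv.Perm (Fin n),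
            (a p.1 * a p.2) * (b (π p.1) * b (π p.2)) := Finset.sum_comm
      _ = ∑ p ∈ (univ : Finset (Fin n)).diag, ∑ π : Equiv.Perm (Fin n),
            (a p.1 * a p.2) * (b (π p.1) * b (π p.2))
          + ∑ p ∈ (univ : Finset (Fin n)).offDiag, ∑ π : Equiv.Perm (Fin n),
            (a p.1 * a p.2) * (b (π p.1) * b (π p.2)) := by
          rw [← Finset.sum_union (Finset.disjoint_diag_offDiag _),
            Finset.diag_union_offDiag]
      _ = ((n.factorial : ℝ) / n) * ((∑ i, a i * a i) * (∑ i, b i * b i))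
          + ((n.factorial : ℝ) / (n * ((n:ℝ) - 1))) *
            ((∑ p ∈ (univ : Finset (Fin n)).offDiag, a p.1 * a p.2) *
             (∑ p ∈ (univ : Finset (Fin n)).offDiag, b p.1 * b p.2)) := by
          congr 1
          · rw [Finset.sum_diag]
            have h1 : ∀ i : Fin n, ∑ π : Equiv.Perm (Fin n),
                (a i * a i) * (b (π i) * b (π i))
                = (a i * a i) * (((n.factorial : ℝ) / n) * ∑ x, b x * b x) :=
              fun i => by
                rw [← Finset.mul_sum]
                congr 1
                exact perm_sum_single hn0 (fun x => b x * b x) i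
            simp_rw [h1]
            rw [← Finset.sum_mul]
            ring
          · have h1 : ∀ p ∈ (univ : Finset (Fin n)).offDiag,
                ∑ π : Equiv.Perm (Fin n), (a p.1 * a p.2) * (b (π p.1) * b (π p.2))
                = (a p.1 * a p.2) * (((n.factorial : ℝ) / (n * ((n:ℝ) - 1))) *
                    ∑ q ∈ (univ : Finset (Fin n)).offDiag, b q.1 * b q.2) := by
              intro p hp
              rw [← Finset.mul_sum]
              congr 1
              exact perm_sum_pair hn b b (Finset.mem_offDiag.mp hp).2.2
            rw [Finset.sum_congr rfl h1, ← Finset.sum_mul]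
            ring
  rw [hE, hE2, habar, hbbar, centered_sum_sq, centered_sum_sq,
    offDiag_prod_sum, offDiag_prod_sum]
  field_simp
  ring
end
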